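/- arXiv:1706.03164 — 2 statements merged into one kernel-verified Lean document; each statement's English description precedes it below -/
import Mathlib

section
/- Let A be a unital associative algebra over ℝ, and let Δ, and for each (v,v') ∈ ℤ², elements M_{v,v'} ∈ A with M_{v,v'}M_{u,u'} = M_{v+u,v'+u'}, M_{0,0} = 1. Set C = [Δ, M_{1,0}] and suppose [Δ, M_{v,0}] = v M_{v-1,0} C, [C, M_{v,v'}] = λ v' M_{v,v'-1} for a scalar λ, and [Δ, C] = 0. Then Δᵏ = M_{-k-1,0} (M_{2,0} Δ)ᵏ M_{-k+1,0} for all k ≥ 1. -/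
theorem stmt_11 (A : Type*) [Ring A] [Algebra ℝ A] (lam : ℝ) (Δ : A) (M : ℤ → ℤ → A)
    (hM : ∀ v v' u u' : ℤ, M v v' * M u u' = M (v + u) (v' + u')) (hM0 : M 0 0 = 1)
    (C : A) (hC : C = ⁅Δ, M 1 0⁆)
    (h1 : ∀ v : ℤ, ⁅Δ, M v 0⁆ = (v : ℝ) • (M (v - 1) 0 * C))
    (h2 : ∀ v v' : ℤ, ⁅C, M v v'⁆ = (lam * (v' : ℝ)) • M v (v' - 1))
    (h3 : ⁅Δ, C⁆ = 0) :
    ∀ k : ℕ, 1 ≤ k →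
      Δ ^ k = M (-(k : ℤ) - 1) 0 * (M 2 0 * Δ) ^ k * M (-(k : ℤ) + 1) 0 := by
  have hN : ∀ a b : ℤ, M a 0 * M b 0 = M (a + b) 0 := by
    intro a b; simpa using hM a 0 b 0
  have hDC : Δ * C = C * Δ := by
    have := h3; rw [Ring.lie_def, sub_eq_zero] at this; exact this
  have hDN : ∀ v : ℤ, Δ * M v 0 = M v 0 * Δ + (v : ℝ) • (M (v - 1) 0 * C) := by
    intro v
    have := h1 v
    rw [Ring.lie_def, sub_eq_iff_eq_add'] at this
    exact this
  have hD1 : Δ * M 1 0 = M 1 0 * Δ + C := by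
    have h := hDN 1
    norm_num [hM0] at h
    exact h
  -- hE : Δ^(m+1) * M 1 0 = M 1 0 * Δ^(m+1) + (m+1) • (C * Δ^m)
  have hE : ∀ m : ℕ, Δ ^ (m + 1) * M 1 0
      = M 1 0 * Δ ^ (m + 1) + ((m : ℝ) + 1) • (C * Δ ^ m) := by
    intro m
    induction m with
    | zero => simpa using hD1
    | succ n ih =>
      have step : Δ ^ (n + 1 + 1) * M 1 0 = Δ * (Δ ^ (n + 1) * M 1 0) := by
        rw [pow_succ', mul_assoc]
      rw [step, ih, mul_add, ← mul_assoc, hD1, mul_smul_comm, ← mul_assoc, hDC,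
        add_mul, mul_assoc C Δ, ← pow_succ', mul_assoc (M 1 0) Δ, ← pow_succ']
      push_cast
      module
  -- main: T^(m+1) = M (m+2) 0 * Δ^(m+1) * M m 0
  have hS : ∀ m : ℕ, (M 2 0 * Δ) ^ (m + 1)
      = M ((m : ℤ) + 2) 0 * Δ ^ (m + 1) * M (m : ℤ) 0 := by
    intro m
    induction m with
    | zero => simp [hM0]
    | succ n ih =>
      have step : (M 2 0 * Δ) ^ (n + 1 + 1) = (M 2 0 * Δ) * (M 2 0 * Δ) ^ (n + 1) :=
        pow_succ' _ _
      have hd : Δ * M ((n : ℤ) + 2) 0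
          = M ((n : ℤ) + 2) 0 * Δ + ((n : ℝ) + 2) • (M ((n : ℤ) + 1) 0 * C) := by
        have h := hDN ((n : ℤ) + 2)
        rw [show ((n : ℤ) + 2 - 1) = (n : ℤ) + 1 from by ring] at h
        push_cast at h
        exact h
      have he := hE (n + 1)
      push_cast at he
      have hMn1 : M ((n : ℤ) + 1) 0 = M 1 0 * M (n : ℤ) 0 := by
        rw [hN]; ring_nf
      rw [step, ih]
      push_cast
      calc (M 2 0 * Δ) * (M ((n : ℤ) + 2) 0 * Δ ^ (n + 1) * M (n : ℤ) 0)
          = M 2 0 * ((Δ * M ((n : ℤ) + 2) 0) * (Δ ^ (n + 1) * M (n : ℤ) 0)) := by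
            noncomm_ring
        _ = M 2 0 * ((M ((n : ℤ) + 2) 0 * Δ + ((n : ℝ) + 2) • (M ((n : ℤ) + 1) 0 * C))
              * (Δ ^ (n + 1) * M (n : ℤ) 0)) := by rw [hd]
        _ = (M 2 0 * M ((n : ℤ) + 2) 0) * ((Δ * Δ ^ (n + 1)) * M (n : ℤ) 0)
            + ((n : ℝ) + 2) • ((M 2 0 * M ((n : ℤ) + 1) 0) * (C * Δ ^ (n + 1) * M (n : ℤ) 0)) := by
            simp only [add_mul, mul_add, smul_mul_assoc, mul_smul_comm, mul_assoc]
        _ = M ((n : ℤ) + 4) 0 * (Δ ^ (n + 1 + 1) * M (n : ℤ) 0)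
            + ((n : ℝ) + 2) • (M ((n : ℤ) + 3) 0 * (C * Δ ^ (n + 1) * M (n : ℤ) 0)) := by
            rw [hN, hN, ← pow_succ',
              show (2 + ((n : ℤ) + 2)) = (n : ℤ) + 4 from by ring,
              show (2 + ((n : ℤ) + 1)) = (n : ℤ) + 3 from by ring]
        _ = M ((n : ℤ) + 3) 0 * ((M 1 0 * Δ ^ (n + 1 + 1)
              + ((n : ℝ) + 2) • (C * Δ ^ (n + 1))) * M (n : ℤ) 0) := by
            simp only [add_mul, mul_add, smul_mul_assoc, mul_smul_comm, mul_assoc, hN]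
            rw [← mul_assoc (M ((n : ℤ) + 3) 0) (M 1 0), hN,
              show ((n : ℤ) + 3 + 1) = (n : ℤ) + 4 from by ring]
        _ = M ((n : ℤ) + 3) 0 * ((Δ ^ (n + 1 + 1) * M 1 0) * M (n : ℤ) 0) := by
            rw [he, show ((n : ℝ) + 1 + 1) = (n : ℝ) + 2 from by ring]
        _ = M ((n : ℤ) + 1 + 2) 0 * Δ ^ (n + 1 + 1) * M ((n : ℤ) + 1) 0 := by
            rw [mul_assoc (Δ ^ (n + 1 + 1)), hN,
              show (1 + (n : ℤ)) = (n : ℤ) + 1 from by ring,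
              show ((n : ℤ) + 1 + 2) = (n : ℤ) + 3 from by ring, mul_assoc]
  intro k hk
  obtain ⟨m, rfl⟩ := Nat.exists_eq_add_of_le hk
  have hs := hS m
  rw [show (1 + m) = m + 1 from by omega]
  rw [hs, ← mul_assoc, ← mul_assoc, hN, mul_assoc, hN]
  push_cast
  rw [show (-((m : ℤ) + 1) - 1 + ((m : ℤ) + 2)) = 0 from by ring,
    show ((m : ℤ) + (-((m : ℤ) + 1) + 1)) = 0 from by ring, hM0, one_mul, mul_one]
end

section
/- Under the same hypotheses as the preceding abstract operator identity (commutation relations [Δ, M_{v,0}] = v M_{v-1,0} C, [C, M_{v,v'}] = λ v' M_{v,v'-1}, [Δ, C] = 0, and analogous relations with the roles of the two indices swapped), for every k ≥ 2 one has Δᵏ = M_{-1,-1} Δ^{k-2} M_{0,k-1} Δ M_{k,-k+2} Δ M_{-k+1,0}. -/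
set_option linter.unusedSectionVars false
set_option maxHeartbeats 4000000

section
variable {A : Type*} [Ring A] [Algebra ℝ A] (lam : ℝ) (Δ : A) (M : ℤ → ℤ → A) (C C' : A)

lemma sasaki_moveDM
    (hM : ∀ v v' u u' : ℤ, M v v' * M u u' = M (v + u) (v' + u'))
    (hCM : ∀ a b : ℤ, C * M a b = M a b * C + (lam * (b : ℝ)) • M a (b-1))
    (hDMa : ∀ a : ℤ, Δ * M a 0 = M a 0 * Δ + (a : ℝ) • (M (a-1) 0 * C))
    (hDMb : ∀ b : ℤ, Δ * M 0 b = M 0 b * Δ + (b : ℝ) • (M 0 (b-1) * C')) :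
    ∀ a b : ℤ, Δ * M a b = M a b * Δ + (a : ℝ) • (M (a-1) b * C)
      + (b : ℝ) • (M a (b-1) * C') + (lam * (a : ℝ) * (b : ℝ)) • M (a-1) (b-1) := by
  intro a b
  have hsplit : M a b = M a 0 * M 0 b := by rw [hM]; norm_num
  calc Δ * M a b = (Δ * M a 0) * M 0 b := by rw [hsplit, mul_assoc]
    _ = (M a 0 * Δ + (a : ℝ) • (M (a-1) 0 * C)) * M 0 b := by rw [hDMa]
    _ = M a 0 * (Δ * M 0 b) + (a : ℝ) • (M (a-1) 0 * (C * M 0 b)) := by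
        rw [add_mul, smul_mul_assoc, mul_assoc, mul_assoc]
    _ = M a 0 * (M 0 b * Δ + (b : ℝ) • (M 0 (b-1) * C'))
        + (a : ℝ) • (M (a-1) 0 * (M 0 b * C + (lam * (b : ℝ)) • M 0 (b-1))) := by
        rw [hDMb, hCM]
    _ = _ := by
        simp only [mul_add, mul_smul_comm, smul_add, smul_smul, ← mul_assoc, hM]
        norm_num
        ring_nf
        module

lemma sasaki_key
    (hM : ∀ v v' u u' : ℤ, M v v' * M u u' = M (v + u) (v' + u'))
    (hCM : ∀ a b : ℤ, C * M a b = M a b * C + (lam * (b : ℝ)) • M a (b-1))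
    (hC'M : ∀ a b : ℤ, C' * M a b = M a b * C' + (lam * (a : ℝ)) • M (a-1) b)
    (hDC : Δ * C = C * Δ) (hDC' : Δ * C' = C' * Δ) (hC'C : C' * C = C * C')
    (hDM : ∀ a b : ℤ, Δ * M a b = M a b * Δ + (a : ℝ) • (M (a-1) b * C)
      + (b : ℝ) • (M a (b-1) * C') + (lam * (a : ℝ) * (b : ℝ)) • M (a-1) (b-1)) :
    ∀ n : ℤ, M 0 (n-1) * (Δ * (M n (2-n) * (Δ * (M (1-n) 0 * Δ))))
      = Δ * (M 0 n * (Δ * (M (n+1) (1-n) * (Δ * M (-n) 0)))) := by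
  intro n
  have hMM' : ∀ (a b c d : ℤ) (x : A), M a b * (M c d * x) = M (a+c) (b+d) * x := by
    intro a b c d x; rw [← mul_assoc, hM]
  have hDM' : ∀ (a b : ℤ) (x : A), Δ * (M a b * x) = M a b * (Δ * x)
      + (a : ℝ) • (M (a-1) b * (C * x)) + (b : ℝ) • (M a (b-1) * (C' * x))
      + (lam * (a : ℝ) * (b : ℝ)) • (M (a-1) (b-1) * x) := by
    intro a b x
    rw [← mul_assoc, hDM, add_mul, add_mul, add_mul, smul_mul_assoc, smul_mul_assoc,
      smul_mul_assoc, mul_assoc, mul_assoc, mul_assoc]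
  have hCM' : ∀ (a b : ℤ) (x : A), C * (M a b * x) = M a b * (C * x)
      + (lam * (b : ℝ)) • (M a (b-1) * x) := by
    intro a b x; rw [← mul_assoc, hCM, add_mul, smul_mul_assoc, mul_assoc]
  have hC'M' : ∀ (a b : ℤ) (x : A), C' * (M a b * x) = M a b * (C' * x)
      + (lam * (a : ℝ)) • (M (a-1) b * x) := by
    intro a b x; rw [← mul_assoc, hC'M, add_mul, smul_mul_assoc, mul_assoc]
  have hDC2 : ∀ x : A, Δ * (C * x) = C * (Δ * x) := by
    intro x; rw [← mul_assoc, hDC, mul_assoc]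
  have hDC'2 : ∀ x : A, Δ * (C' * x) = C' * (Δ * x) := by
    intro x; rw [← mul_assoc, hDC', mul_assoc]
  have hC'C2 : ∀ x : A, C' * (C * x) = C * (C' * x) := by
    intro x; rw [← mul_assoc, hC'C, mul_assoc]
  simp only [mul_assoc, hDM', hDM, hCM', hCM, hC'M', hC'M, hDC2, hDC, hDC'2, hDC', hC'C2, hC'C,
    hMM', hM, mul_add, add_mul, smul_add, mul_smul_comm, smul_mul_assoc, smul_smul]
  push_cast
  ring_nf
  module

lemma sasaki_base
    (hM : ∀ v v' u u' : ℤ, M v v' * M u u' = M (v + u) (v' + u')) (hM0 : M 0 0 = 1)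
    (hCM : ∀ a b : ℤ, C * M a b = M a b * C + (lam * (b : ℝ)) • M a (b-1))
    (hC'M : ∀ a b : ℤ, C' * M a b = M a b * C' + (lam * (a : ℝ)) • M (a-1) b)
    (hDC : Δ * C = C * Δ) (hDC' : Δ * C' = C' * Δ) (hC'C : C' * C = C * C')
    (hDM : ∀ a b : ℤ, Δ * M a b = M a b * Δ + (a : ℝ) • (M (a-1) b * C)
      + (b : ℝ) • (M a (b-1) * C') + (lam * (a : ℝ) * (b : ℝ)) • M (a-1) (b-1)) :
    Δ ^ 2 = M (-1) (-1) * (M 0 1 * (Δ * (M 2 0 * (Δ * M (-1) 0)))) := by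
  have hMM' : ∀ (a b c d : ℤ) (x : A), M a b * (M c d * x) = M (a+c) (b+d) * x := by
    intro a b c d x; rw [← mul_assoc, hM]
  have hDM' : ∀ (a b : ℤ) (x : A), Δ * (M a b * x) = M a b * (Δ * x)
      + (a : ℝ) • (M (a-1) b * (C * x)) + (b : ℝ) • (M a (b-1) * (C' * x))
      + (lam * (a : ℝ) * (b : ℝ)) • (M (a-1) (b-1) * x) := by
    intro a b x
    rw [← mul_assoc, hDM, add_mul, add_mul, add_mul, smul_mul_assoc, smul_mul_assoc,
      smul_mul_assoc, mul_assoc, mul_assoc, mul_assoc]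
  have hCM' : ∀ (a b : ℤ) (x : A), C * (M a b * x) = M a b * (C * x)
      + (lam * (b : ℝ)) • (M a (b-1) * x) := by
    intro a b x; rw [← mul_assoc, hCM, add_mul, smul_mul_assoc, mul_assoc]
  have hC'M' : ∀ (a b : ℤ) (x : A), C' * (M a b * x) = M a b * (C' * x)
      + (lam * (a : ℝ)) • (M (a-1) b * x) := by
    intro a b x; rw [← mul_assoc, hC'M, add_mul, smul_mul_assoc, mul_assoc]
  have hDC2 : ∀ x : A, Δ * (C * x) = C * (Δ * x) := by
    intro x; rw [← mul_assoc, hDC, mul_assoc]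
  have hDC'2 : ∀ x : A, Δ * (C' * x) = C' * (Δ * x) := by
    intro x; rw [← mul_assoc, hDC', mul_assoc]
  have hC'C2 : ∀ x : A, C' * (C * x) = C * (C' * x) := by
    intro x; rw [← mul_assoc, hC'C, mul_assoc]
  rw [pow_two]
  simp only [mul_assoc, hDM', hDM, hCM', hCM, hC'M', hC'M, hDC2, hDC, hDC'2, hDC', hC'C2, hC'C,
    hMM', hM, mul_add, add_mul, smul_add, mul_smul_comm, smul_mul_assoc, smul_smul]
  norm_num [hM0]

end

theorem stmt_12 (A : Type*) [Ring A] [Algebra ℝ A] (lam : ℝ) (Δ : A) (M : ℤ → ℤ → A)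
    (hM : ∀ v v' u u' : ℤ, M v v' * M u u' = M (v + u) (v' + u')) (hM0 : M 0 0 = 1)
    (C C' : A) (hC : C = ⁅Δ, M 1 0⁆) (hC' : C' = ⁅Δ, M 0 1⁆)
    (h1 : ∀ v : ℤ, ⁅Δ, M v 0⁆ = (v : ℝ) • (M (v - 1) 0 * C))
    (h2 : ∀ v v' : ℤ, ⁅C, M v v'⁆ = (lam * (v' : ℝ)) • M v (v' - 1))
    (h3 : ⁅Δ, C⁆ = 0)
    (h1' : ∀ v' : ℤ, ⁅Δ, M 0 v'⁆ = (v' : ℝ) • (M 0 (v' - 1) * C'))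
    (h2' : ∀ v v' : ℤ, ⁅C', M v v'⁆ = (lam * (v : ℝ)) • M (v - 1) v')
    (h3' : ⁅Δ, C'⁆ = 0) :
    ∀ k : ℕ, 2 ≤ k →
      Δ ^ k = M (-1) (-1) * Δ ^ (k - 2) * M 0 ((k : ℤ) - 1) * Δ *
        M (k : ℤ) (-(k : ℤ) + 2) * Δ * M (-(k : ℤ) + 1) 0 := by
  -- derived move lemmas
  have hDC : Δ * C = C * Δ := by rw [Ring.lie_def, sub_eq_zero] at h3; exact h3
  have hDC' : Δ * C' = C' * Δ := by rw [Ring.lie_def, sub_eq_zero] at h3'; exact h3'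
  have hCM : ∀ a b : ℤ, C * M a b = M a b * C + (lam * (b : ℝ)) • M a (b-1) := by
    intro a b; have := h2 a b
    rw [Ring.lie_def, sub_eq_iff_eq_add] at this
    rw [this]; abel
  have hC'M : ∀ a b : ℤ, C' * M a b = M a b * C' + (lam * (a : ℝ)) • M (a-1) b := by
    intro a b; have := h2' a b
    rw [Ring.lie_def, sub_eq_iff_eq_add] at this
    rw [this]; abel
  have hDMa : ∀ a : ℤ, Δ * M a 0 = M a 0 * Δ + (a : ℝ) • (M (a-1) 0 * C) := by
    intro a; have := h1 a
    rw [Ring.lie_def, sub_eq_iff_eq_add] at this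
    rw [this]; abel
  have hDMb : ∀ b : ℤ, Δ * M 0 b = M 0 b * Δ + (b : ℝ) • (M 0 (b-1) * C') := by
    intro b; have := h1' b
    rw [Ring.lie_def, sub_eq_iff_eq_add] at this
    rw [this]; abel
  have e1 : C * M 0 1 = M 0 1 * C + lam • (1 : A) := by
    have := hCM 0 1; norm_num at this; rw [this, hM0]
  have hC'C : C' * C = C * C' := by
    rw [hC', Ring.lie_def]
    have c1 : C * (Δ * M 0 1) = Δ * M 0 1 * C + lam • Δ := by
      calc C * (Δ * M 0 1) = Δ * (C * M 0 1) := by rw [← mul_assoc, ← hDC, mul_assoc]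
        _ = Δ * M 0 1 * C + lam • Δ := by
            rw [e1, mul_add, mul_smul_comm, mul_one, mul_assoc]
    have c2 : C * (M 0 1 * Δ) = M 0 1 * Δ * C + lam • Δ := by
      calc C * (M 0 1 * Δ) = (C * M 0 1) * Δ := by rw [mul_assoc]
        _ = M 0 1 * (C * Δ) + lam • Δ := by rw [e1, add_mul, smul_mul_assoc, one_mul, mul_assoc]
        _ = M 0 1 * Δ * C + lam • Δ := by rw [← hDC, ← mul_assoc]
    rw [sub_mul, mul_sub, c1, c2]; abel
  have hDM := sasaki_moveDM lam Δ M C C' hM hCM hDMa hDMb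
  have key := sasaki_key lam Δ M C C' hM hCM hC'M hDC hDC' hC'C hDM
  intro k hk
  induction k, hk using Nat.le_induction with
  | base =>
      have b := sasaki_base lam Δ M C C' hM hM0 hCM hC'M hDC hDC' hC'C hDM
      norm_num [pow_zero]
      simp only [mul_assoc, mul_one, one_mul]
      convert b using 3
  | succ k hk ih =>
      have hk2 : k + 1 - 2 = (k - 2) + 1 := by omega
      have keyk := key (k : ℤ)
      have goalidx1 : ((k : ℤ) + 1) - 1 = (k : ℤ) := by ring
      have goalidx2 : -((k : ℤ) + 1) + 2 = 1 - (k : ℤ) := by ring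
      have goalidx3 : -((k : ℤ) + 1) + 1 = -(k : ℤ) := by ring
      have ihidx1 : -(k : ℤ) + 2 = 2 - (k : ℤ) := by ring
      have ihidx2 : -(k : ℤ) + 1 = 1 - (k : ℤ) := by ring
      rw [ihidx1, ihidx2] at ih
      push_cast
      rw [goalidx1, goalidx2, goalidx3, show k - 1 = (k - 2) + 1 from by omega]
      calc Δ ^ (k + 1) = Δ ^ k * Δ := by rw [pow_succ]
        _ = M (-1) (-1) * Δ ^ (k - 2) * M 0 ((k : ℤ) - 1) * Δ *
              M (k : ℤ) (2 - (k : ℤ)) * Δ * M (1 - (k : ℤ)) 0 * Δ := by rw [ih]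
        _ = M (-1) (-1) * (Δ ^ (k - 2) *
              (M 0 ((k : ℤ) - 1) * (Δ * (M (k : ℤ) (2 - (k : ℤ)) * (Δ * (M (1 - (k : ℤ)) 0 * Δ)))))) := by
            simp only [mul_assoc]
        _ = M (-1) (-1) * (Δ ^ (k - 2) *
              (Δ * (M 0 (k : ℤ) * (Δ * (M ((k : ℤ) + 1) (1 - (k : ℤ)) * (Δ * M (-(k : ℤ)) 0)))))) := by
            rw [keyk]
        _ = M (-1) (-1) * Δ ^ ((k - 2) + 1) * M 0 (k : ℤ) * Δ *
              M ((k : ℤ) + 1) (1 - (k : ℤ)) * Δ * M (-(k : ℤ)) 0 := by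
            rw [pow_succ]
            simp only [mul_assoc]
end
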